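/- arXiv:2306.11599 — 5 statements merged into one kernel-verified Lean document; each statement's English description precedes it below -/
import Mathlib

section
/- (i) For any set of exchanges 𝒴 with 0 ∈ 𝒴, NCA(𝒴) implies NA_i for every agent i = 1,…,N, where NA_i means K_i ∩ L^0_+(Ω,F^i_T,P) = {0}. (ii) If in addition every Y ∈ 𝒴 satisfies ∑_{i=1}^N Y^i ≤ 0 P-a.s., then the global no-arbitrage condition NA, i.e. K ∩ L^0_+(Ω,F_T,P) = {0}, implies NCA(𝒴). -/
open MeasureTheory Filter
open scoped ENNReal

noncomputable section

namespace Collective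

/-- A discrete-time multi-agent financial market: time horizon `T ≥ 1`, `N ≥ 1` agents,
`J` assets with price processes `X`, global filtration `F` with `F T` the ambient σ-algebra,
agent filtrations `Fi i` with `Fi i t ⊆ F t`, and `assets i ⊆ {1,…,J}` the assets agent `i`
may trade; every `X j` with `j ∈ assets i` is `Fi i`-adapted and every `X j t` is `P`-integrable. -/
structure Market (Ω : Type*) [m0 : MeasurableSpace Ω] where
  T : ℕ
  N : ℕ
  J : ℕ
  P : Measure Ω
  F : ℕ → MeasurableSpace Ω
  Fi : Fin N → ℕ → MeasurableSpace Ω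
  X : Fin J → ℕ → Ω → ℝ
  assets : Fin N → Finset (Fin J)
  hT : 1 ≤ T
  hN : 1 ≤ N
  hProb : IsProbabilityMeasure P
  F_mono : Monotone F
  F_le : ∀ t, F t ≤ m0
  F_top : F T = m0
  Fi_mono : ∀ i, Monotone (Fi i)
  Fi_le : ∀ i t, Fi i t ≤ F t
  X_adapted : ∀ j t, t ≤ T → Measurable[F t] (X j t)
  Xi_adapted : ∀ i, ∀ j ∈ assets i, ∀ t, t ≤ T → Measurable[Fi i t] (X j t)
  X_int : ∀ j t, Integrable (X j t) P

variable {Ω : Type*} [m0 : MeasurableSpace Ω] (M : Market Ω)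

/-- `K_{i,s:S}`: gains of zero-cost predictable strategies of agent `i` over period `{s,…,S}`. -/
def KiSt (i : Fin M.N) (s S : ℕ) : Set (Ω → ℝ) :=
  { f | ∃ H : Fin M.J → ℕ → Ω → ℝ,
      (∀ j ∈ M.assets i, ∀ t, Measurable[M.Fi i (t - 1)] (H j t)) ∧
      f = fun ω => ∑ j ∈ M.assets i, ∑ t ∈ Finset.Icc (s + 1) S,
            H j t ω * (M.X j t ω - M.X j (t - 1) ω) }

/-- `K_i`: terminal gains of zero-cost admissible (predictable) strategies of agent `i`. -/
def Ki (i : Fin M.N) : Set (Ω → ℝ) := KiSt M i 0 M.T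

/-- `K_{s:S}` for the global market (all assets, global filtration). -/
def KglobSt (s S : ℕ) : Set (Ω → ℝ) :=
  { f | ∃ H : Fin M.J → ℕ → Ω → ℝ,
      (∀ j t, Measurable[M.F (t - 1)] (H j t)) ∧
      f = fun ω => ∑ j, ∑ t ∈ Finset.Icc (s + 1) S,
            H j t ω * (M.X j t ω - M.X j (t - 1) ω) }

/-- `K`: terminal gains in the global market. -/
def Kglob : Set (Ω → ℝ) := KglobSt M 0 M.T

/-- No Collective Arbitrage with respect to the exchange set `Ys`:
`(⨉ᵢ Kᵢ + 𝒴) ∩ ⨉ᵢ L⁰₊(F^i_T) = {0}` (in the a.s. sense). -/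
def NCA (Ys : Set (Fin M.N → Ω → ℝ)) : Prop :=
  ∀ k : Fin M.N → Ω → ℝ, (∀ i, k i ∈ Ki M i) → ∀ Y ∈ Ys,
    (∀ i, ∀ᵐ ω ∂M.P, 0 ≤ k i ω + Y i ω) →
    ∀ i, (fun ω => k i ω + Y i ω) =ᵐ[M.P] (fun _ => (0 : ℝ))

/-- Classical no-arbitrage for agent `i`: `K_i ∩ L⁰₊(F^i_T) = {0}`. -/
def NAi (i : Fin M.N) : Prop :=
  ∀ k ∈ Ki M i, (∀ᵐ ω ∂M.P, 0 ≤ k ω) → k =ᵐ[M.P] (fun _ => (0 : ℝ))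

/-- Classical global no-arbitrage: `K ∩ L⁰₊(F_T) = {0}`. -/
def NAglob : Prop :=
  ∀ k ∈ Kglob M, (∀ᵐ ω ∂M.P, 0 ≤ k ω) → k =ᵐ[M.P] (fun _ => (0 : ℝ))

/-- `K^𝒴 = ⨉ᵢ (Kᵢ - L⁰₊(F^i_T)) + 𝒴`. -/
def KY (Ys : Set (Fin M.N → Ω → ℝ)) : Set (Fin M.N → Ω → ℝ) :=
  { f | ∃ k l Y : Fin M.N → Ω → ℝ, (∀ i, k i ∈ Ki M i) ∧
      (∀ i, Measurable[M.Fi i M.T] (l i) ∧ (∀ᵐ ω ∂M.P, 0 ≤ l i ω)) ∧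
      Y ∈ Ys ∧ f = fun i ω => k i ω - l i ω + Y i ω }

/-- `⨉ᵢ Kᵢ + 𝒴`. -/
def sumKY (Ys : Set (Fin M.N → Ω → ℝ)) : Set (Fin M.N → Ω → ℝ) :=
  { f | ∃ k Y : Fin M.N → Ω → ℝ, (∀ i, k i ∈ Ki M i) ∧ Y ∈ Ys ∧
      f = fun i ω => k i ω + Y i ω }

/-- `C^𝒴 = K^𝒴 ∩ ⨉ᵢ L¹(F^i_T,P)`. -/
def CY (Ys : Set (Fin M.N → Ω → ℝ)) : Set (Fin M.N → Ω → ℝ) :=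
  { f | f ∈ KY M Ys ∧ ∀ i, Integrable (f i) M.P }

/-- The polar `(C^𝒴)⁰` in `⨉ᵢ L^∞(F^i_T,P)`. -/
def polar (Ys : Set (Fin M.N → Ω → ℝ)) : Set (Fin M.N → Ω → ℝ) :=
  { z | (∀ i, Measurable[M.Fi i M.T] (z i) ∧ ∃ C : ℝ, ∀ᵐ ω ∂M.P, |z i ω| ≤ C) ∧
      ∀ f ∈ CY M Ys, (∑ i, ∫ ω, z i ω * f i ω ∂M.P) ≤ 0 }

/-- `(C^𝒴)⁰₁`: vectors of probability measures, absolutely continuous with respect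
to `P`, whose densities form an element of the polar `(C^𝒴)⁰`. -/
def polarOne (Ys : Set (Fin M.N → Ω → ℝ)) : Set (Fin M.N → Measure Ω) :=
  { Q | ∃ z ∈ polar M Ys, (∀ i, ∀ᵐ ω ∂M.P, 0 ≤ z i ω) ∧
      ∀ i, IsProbabilityMeasure (Q i) ∧
        Q i = M.P.withDensity (fun ω => ENNReal.ofReal (z i ω)) }

/-- `M_i`: martingale measures for agent `i`'s assets (with respect to the filtration `Fi i`)
with a bounded `F^i_T`-measurable density with respect to `P`. -/
def Mi (i : Fin M.N) : Set (Measure Ω) :=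
  { Q | IsProbabilityMeasure Q ∧
      (∃ z : Ω → ℝ, Measurable[M.Fi i M.T] z ∧ (∀ ω, 0 ≤ z ω) ∧ (∃ C : ℝ, ∀ ω, z ω ≤ C) ∧
        Q = M.P.withDensity (fun ω => ENNReal.ofReal (z ω))) ∧
      ∀ j ∈ M.assets i,
        (∀ t, t ≤ M.T → Integrable (M.X j t) Q) ∧
        (∀ t, 1 ≤ t → t ≤ M.T → ∀ s : Set Ω, MeasurableSet[M.Fi i (t - 1)] s →
          ∫ ω in s, M.X j t ω ∂Q = ∫ ω in s, M.X j (t - 1) ω ∂Q) }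

/-- `M^𝒴`: vectors of martingale measures satisfying the polarity condition on `𝒴 ∩ ⨉ᵢ L¹`. -/
def MY (Ys : Set (Fin M.N → Ω → ℝ)) : Set (Fin M.N → Measure Ω) :=
  { Q | (∀ i, Q i ∈ Mi M i) ∧
      ∀ Y ∈ Ys, (∀ i, Integrable (Y i) M.P) →
        (∑ i, ∫ ω, Y i ω ∂(Q i)) ≤ 0 }

/-- Closedness with respect to convergence in `P`-probability (as a subset of `L⁰`). -/
def ClosedInProb (S : Set (Fin M.N → Ω → ℝ)) : Prop :=
  ∀ (f : ℕ → Fin M.N → Ω → ℝ) (g : Fin M.N → Ω → ℝ),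
    (∀ n, f n ∈ S) →
    (∀ i, TendstoInMeasure M.P (fun n => f n i) atTop (g i)) →
    ∃ g' ∈ S, ∀ i, g i =ᵐ[M.P] g' i

/-- `Ys` is a convex cone. -/
def IsConvexCone (Ys : Set (Fin M.N → Ω → ℝ)) : Prop :=
  (∀ Y ∈ Ys, ∀ Z ∈ Ys, Y + Z ∈ Ys) ∧ (∀ Y ∈ Ys, ∀ c : ℝ, 0 ≤ c → c • Y ∈ Ys)

/-- `Ys` is a vector (sub)space. -/
def IsLinSubspace (Ys : Set (Fin M.N → Ω → ℝ)) : Prop :=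
  (fun _ _ => (0 : ℝ)) ∈ Ys ∧ (∀ Y ∈ Ys, ∀ Z ∈ Ys, Y + Z ∈ Ys) ∧
    (∀ Y ∈ Ys, ∀ c : ℝ, c • Y ∈ Ys)

/-- `Ys` contains `ℝ^N₀ = {x ∈ ℝ^N : ∑ᵢ xⁱ = 0}` (as constant random vectors). -/
def ContainsR0 (Ys : Set (Fin M.N → Ω → ℝ)) : Prop :=
  ∀ x : Fin M.N → ℝ, (∑ i, x i) = 0 → (fun i _ => x i) ∈ Ys

/-- `Q` is (a probability measure) equivalent to `P`. -/
def EquivToP (Q : Measure Ω) : Prop := Q ≪ M.P ∧ M.P ≪ Q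

/-- `𝒴` is a set of allowed exchanges: `𝒴 ⊆ ⨉ᵢ L⁰(Ω,F^i_T,P)` and `0 ∈ 𝒴`. -/
def IsExchangeSet (Ys : Set (Fin M.N → Ω → ℝ)) : Prop :=
  (fun _ _ => (0 : ℝ)) ∈ Ys ∧ ∀ Y ∈ Ys, ∀ i, Measurable[M.Fi i M.T] (Y i)

/-- the full zero-sum exchange set `𝒴₀`. -/
def Y0 : Set (Fin M.N → Ω → ℝ) :=
  { Y | (∀ i, Measurable[M.Fi i M.T] (Y i)) ∧ ∀ᵐ ω ∂M.P, (∑ i, Y i ω) = 0 }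

/-- feasibility for the individual super-replication price `ρ_{i,+}`. -/
def rhoiFeas (i : Fin M.N) (f : Ω → ℝ) (m : ℝ) : Prop :=
  ∃ k ∈ Ki M i, ∀ᵐ ω ∂M.P, f ω ≤ m + k ω

/-- individual super-replication price `ρ_{i,+}(f)` (an extended real, `inf ∅ = +∞`). -/
def rhoi (i : Fin M.N) (f : Ω → ℝ) : EReal :=
  sInf { x : EReal | ∃ m : ℝ, rhoiFeas M i f m ∧ x = (m : EReal) }

/-- feasibility for `ρ^N_+`. -/
def rhoNFeas (g : Fin M.N → Ω → ℝ) (m : Fin M.N → ℝ) : Prop :=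
  ∃ k : Fin M.N → Ω → ℝ, (∀ i, k i ∈ Ki M i) ∧
    ∀ i, ∀ᵐ ω ∂M.P, g i ω ≤ m i + k i ω

/-- super-replication price of all `N` claims without exchanges, `ρ^N_+(g)`. -/
def rhoN (g : Fin M.N → Ω → ℝ) : EReal :=
  sInf { x : EReal | ∃ m : Fin M.N → ℝ, rhoNFeas M g m ∧ x = ((∑ i, m i : ℝ) : EReal) }

/-- feasibility for the collective super-replication price `ρ^𝒴_+`. -/
def rhoYFeas (Ys : Set (Fin M.N → Ω → ℝ)) (g : Fin M.N → Ω → ℝ) (m : Fin M.N → ℝ) : Prop :=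
  ∃ k : Fin M.N → Ω → ℝ, (∀ i, k i ∈ Ki M i) ∧ ∃ Y ∈ Ys,
    ∀ i, ∀ᵐ ω ∂M.P, g i ω ≤ m i + k i ω + Y i ω

/-- collective super-replication price of all claims, `ρ^𝒴_+(g)`. -/
def rhoY (Ys : Set (Fin M.N → Ω → ℝ)) (g : Fin M.N → Ω → ℝ) : EReal :=
  sInf { x : EReal | ∃ m : Fin M.N → ℝ, rhoYFeas M Ys g m ∧ x = ((∑ i, m i : ℝ) : EReal) }

/-- feasibility for `π^𝒴_+`. -/
def piYFeas (Ys : Set (Fin M.N → Ω → ℝ)) (g : Fin M.N → Ω → ℝ) (m : ℝ) : Prop :=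
  ∃ k : Fin M.N → Ω → ℝ, (∀ i, k i ∈ Ki M i) ∧ ∃ Y ∈ Ys,
    ∀ i, ∀ᵐ ω ∂M.P, g i ω ≤ m + k i ω + Y i ω

/-- collective super-replication price of any one claim, `π^𝒴_+(g)`. -/
def piY (Ys : Set (Fin M.N → Ω → ℝ)) (g : Fin M.N → Ω → ℝ) : EReal :=
  sInf { x : EReal | ∃ m : ℝ, piYFeas M Ys g m ∧ x = (m : EReal) }

/-- super-replication price in the full market, `ρ_{full,+}(G)`. -/
def rhoFull (G : Ω → ℝ) : EReal :=
  sInf { x : EReal | ∃ m : ℝ, (∃ k ∈ Kglob M, ∀ᵐ ω ∂M.P, G ω ≤ m + k ω) ∧ x = (m : EReal) }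

/-- `𝒴 + ℝ^N₀`. -/
def plusR0 (Ys : Set (Fin M.N → Ω → ℝ)) : Set (Fin M.N → Ω → ℝ) :=
  { Z | ∃ Y ∈ Ys, ∃ x : Fin M.N → ℝ, (∑ i, x i) = 0 ∧ Z = fun i ω => Y i ω + x i }

/-- super-replication of a single claim for agent `i` when a pricing measure `Q` is
given: besides trading in `K_i`, any `F^i_T`-measurable `Q`-integrable instrument
with zero `Q`-expectation may be used. -/
def rhoQ (Q : Measure Ω) (i : Fin M.N) (f : Ω → ℝ) : EReal :=
  sInf { x : EReal | ∃ m : ℝ,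
    (∃ k ∈ Ki M i, ∃ Y : Ω → ℝ, Measurable[M.Fi i M.T] Y ∧ Integrable Y Q ∧
      (∫ ω, Y ω ∂Q) = 0 ∧ ∀ᵐ ω ∂M.P, f ω ≤ m + k ω + Y ω) ∧ x = (m : EReal) }

/-- an optimizer of `ρ^𝒴_+(g)`. -/
def IsOptimizer (Ys : Set (Fin M.N → Ω → ℝ)) (g : Fin M.N → Ω → ℝ)
    (m : Fin M.N → ℝ) (k : Fin M.N → Ω → ℝ) (Y : Fin M.N → Ω → ℝ) : Prop :=
  (∀ i, k i ∈ Ki M i) ∧ Y ∈ Ys ∧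
    (∀ i, ∀ᵐ ω ∂M.P, g i ω ≤ m i + k i ω + Y i ω) ∧
    ((∑ i, m i : ℝ) : EReal) = rhoY M Ys g

/-- `NCA_{s:S}(𝒴)`: no collective arbitrage over the period `{s,…,S}`. -/
def NCAst (Ys : Set (Fin M.N → Ω → ℝ)) (s S : ℕ) : Prop :=
  ∀ k : Fin M.N → Ω → ℝ, (∀ i, k i ∈ KiSt M i s S) → ∀ Y ∈ Ys,
    (∀ i, ∀ᵐ ω ∂M.P, 0 ≤ k i ω + Y i ω) →
    ∀ i, (fun ω => k i ω + Y i ω) =ᵐ[M.P] (fun _ => (0 : ℝ))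

/-- `NA_{i,s:S}`: classical no-arbitrage for agent `i` over the period `{s,…,S}`. -/
def NAist (i : Fin M.N) (s S : ℕ) : Prop :=
  ∀ k ∈ KiSt M i s S, (∀ᵐ ω ∂M.P, 0 ≤ k ω) → k =ᵐ[M.P] (fun _ => (0 : ℝ))

/-- `NA_{s:S}`: global no-arbitrage over the period `{s,…,S}`. -/
def NAst (s S : ℕ) : Prop :=
  ∀ k ∈ KglobSt M s S, (∀ᵐ ω ∂M.P, 0 ≤ k ω) → k =ᵐ[M.P] (fun _ => (0 : ℝ))

/-- `K^𝒴_{s:S} = ⨉ᵢ K_{i,s:S} − (L⁰₊(F_T))^N + 𝒴`. -/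
def KYst (Ys : Set (Fin M.N → Ω → ℝ)) (s S : ℕ) : Set (Fin M.N → Ω → ℝ) :=
  { f | ∃ k l Y : Fin M.N → Ω → ℝ, (∀ i, k i ∈ KiSt M i s S) ∧
      (∀ i, Measurable (l i) ∧ (∀ᵐ ω ∂M.P, 0 ≤ l i ω)) ∧
      Y ∈ Ys ∧ f = fun i ω => k i ω - l i ω + Y i ω }

/-- `⨉ᵢ K_{i,s:S} + 𝒴`. -/
def sumKYst (Ys : Set (Fin M.N → Ω → ℝ)) (s S : ℕ) : Set (Fin M.N → Ω → ℝ) :=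
  { f | ∃ k Y : Fin M.N → Ω → ℝ, (∀ i, k i ∈ KiSt M i s S) ∧ Y ∈ Ys ∧
      f = fun i ω => k i ω + Y i ω }

/-- `𝒴 − ⨉ᵢ L⁰₊(F^i_T)`. -/
def YminusL0 (Ys : Set (Fin M.N → Ω → ℝ)) : Set (Fin M.N → Ω → ℝ) :=
  { f | ∃ Y ∈ Ys, ∃ l : Fin M.N → Ω → ℝ,
      (∀ i, Measurable[M.Fi i M.T] (l i) ∧ (∀ᵐ ω ∂M.P, 0 ≤ l i ω)) ∧
      f = fun i ω => Y i ω - l i ω }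


/-- (i) `NCA(𝒴)` implies `NA_i` for every agent `i`;
(ii) if every `Y ∈ 𝒴` has `∑ᵢ Yⁱ ≤ 0` a.s., then global `NA` implies `NCA(𝒴)`. -/
theorem nca_implies_nai_and_na_implies_nca (Ys : Set (Fin M.N → Ω → ℝ))
    (hY : IsExchangeSet M Ys) :
    (NCA M Ys → ∀ i, NAi M i) ∧
    ((∀ Y ∈ Ys, ∀ᵐ ω ∂M.P, (∑ i, Y i ω) ≤ 0) → NAglob M → NCA M Ys) := by
  constructor
  · -- (i) NCA implies NA_i for every agent
    intro hnca i k hk hpos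
    have h0 : ∀ j : Fin M.N, (fun l : Fin M.N => fun ω => if l = i then k ω else 0) j ∈ Ki M j := by
      intro j
      by_cases hji : j = i
      · subst hji; simpa using hk
      · simp only [hji, if_false]
        refine ⟨fun _ _ _ => 0, fun _ _ _ => measurable_const, ?_⟩
        funext ω; simp
    have hmain := hnca (fun l ω => if l = i then k ω else 0) h0 (fun _ _ => 0) hY.1 ?_ i
    · filter_upwards [hmain] with ω hω
      simpa using hω
    · intro j
      by_cases hji : j = i
      · subst hji; filter_upwards [hpos] with ω h; simpa using h
      · filter_upwards with ω; simp [hji]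
  · -- (ii) NA implies NCA when exchanges have nonpositive total
    intro hsum hna k hk Y hYmem hpos i
    choose H hm he using hk
    -- the aggregate gain lies in the global K
    have hglob : (fun ω => ∑ i, k i ω) ∈ Kglob M := by
      refine ⟨fun j t ω => ∑ i, (if j ∈ M.assets i then H i j t ω else 0), ?_, ?_⟩
      · intro j t
        apply Finset.measurable_sum
        intro i _
        by_cases hij : j ∈ M.assets i
        · simp only [hij, if_true]
          exact (hm i j hij t).mono (M.Fi_le i (t - 1)) le_rfl
        · simp only [hij, if_false]
          exact measurable_const
      · funext ω
        have hk' : ∀ i, k i ω = ∑ j ∈ M.assets i, ∑ t ∈ Finset.Icc (0 + 1) M.T,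
            H i j t ω * (M.X j t ω - M.X j (t - 1) ω) := by
          intro i; rw [he i]
        simp only [Finset.sum_mul, ite_mul, zero_mul]
        rw [Finset.sum_congr rfl fun i _ => hk' i]
        refine Eq.symm ?_
        trans (∑ j : Fin M.J, ∑ i : Fin M.N, ∑ t ∈ Finset.Icc (0 + 1) M.T,
          (if j ∈ M.assets i then H i j t ω * (M.X j t ω - M.X j (t - 1) ω) else 0))
        · exact Finset.sum_congr rfl fun j _ => Finset.sum_comm
        rw [Finset.sum_comm]
        refine Finset.sum_congr rfl fun i _ => ?_
        rw [← Finset.sum_filter_add_sum_filter_not Finset.univ (fun j => j ∈ M.assets i)]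
        have h1 : ∑ j ∈ Finset.univ.filter (fun j => j ∈ M.assets i),
            ∑ t ∈ Finset.Icc (0 + 1) M.T,
              (if j ∈ M.assets i then H i j t ω * (M.X j t ω - M.X j (t - 1) ω) else 0)
            = ∑ j ∈ M.assets i, ∑ t ∈ Finset.Icc (0 + 1) M.T,
              H i j t ω * (M.X j t ω - M.X j (t - 1) ω) := by
          rw [Finset.filter_mem_eq_inter, Finset.univ_inter]
          refine Finset.sum_congr rfl fun j hj => Finset.sum_congr rfl fun t _ => ?_
          simp [hj]
        have h2 : ∑ j ∈ Finset.univ.filter (fun j => ¬ j ∈ M.assets i),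
            ∑ t ∈ Finset.Icc (0 + 1) M.T,
              (if j ∈ M.assets i then H i j t ω * (M.X j t ω - M.X j (t - 1) ω) else 0)
            = 0 := by
          refine Finset.sum_eq_zero fun j hj => Finset.sum_eq_zero fun t _ => ?_
          simp [(Finset.mem_filter.mp hj).2]
        rw [h1, h2, add_zero]
    have hpos' : ∀ᵐ ω ∂M.P, ∀ i, 0 ≤ k i ω + Y i ω := ae_all_iff.mpr hpos
    have hnonneg : ∀ᵐ ω ∂M.P, 0 ≤ ∑ i, k i ω := by
      filter_upwards [hpos', hsum Y hYmem] with ω h1 h2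
      have h3 : 0 ≤ ∑ i, (k i ω + Y i ω) := Finset.sum_nonneg fun i _ => h1 i
      rw [Finset.sum_add_distrib] at h3
      linarith
    have hzero := hna (fun ω => ∑ i, k i ω) hglob hnonneg
    filter_upwards [hpos', hsum Y hYmem, hzero] with ω h1 h2 h3
    have hs : ∑ j, (k j ω + Y j ω) ≤ 0 := by
      have h3' : ∑ j, k j ω = 0 := h3
      rw [Finset.sum_add_distrib]
      linarith
    have hle := Finset.single_le_sum (f := fun j => k j ω + Y j ω)
      (fun j _ => h1 j) (Finset.mem_univ i)
    have hle' : k i ω + Y i ω ≤ ∑ x, (k x ω + Y x ω) := hle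
    have := h1 i
    show k i ω + Y i ω = 0
    linarith

end Collective
end
end

section
/- (i) If there exists z ∈ (C^𝒴)^0 with z^i > 0 P-a.s. for every i, then NCA(𝒴) holds; in particular, if (C^𝒴)^0_1 contains a vector of probability measures all equivalent to P, then NCA(𝒴) holds. (ii) If 𝒴 ⊆ ⨉_{i=1}^N L^1(Ω,F^i_T,P) and M^𝒴 contains a vector of probability measures all equivalent to P, then NCA(𝒴) holds. -/
open MeasureTheory Filter
open scoped ENNReal

noncomputable section

namespace Collective


/-- One-step lemma: a finite linear combination `∑ φⱼ ζⱼ` with `m`-measurable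
coefficients and conditionally mean-zero integrable `ζⱼ`, bounded below by an
integrable function, is integrable with zero mean. -/
lemma lemOS {Ω : Type*} [m0 : MeasurableSpace Ω] {μ : Measure Ω} [IsFiniteMeasure μ]
    {m : MeasurableSpace Ω} (hm : m ≤ m0) {ι : Type*} (A : Finset ι)
    (φ ζ : ι → Ω → ℝ)
    (hφ : ∀ j ∈ A, Measurable[m] (φ j))
    (hζi : ∀ j ∈ A, Integrable (ζ j) μ)
    (hζ0 : ∀ j ∈ A, ∀ s : Set Ω, MeasurableSet[m] s → ∫ ω in s, ζ j ω ∂μ = 0)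
    (U : Ω → ℝ) (hU : Integrable U μ)
    (hlb : ∀ᵐ ω ∂μ, -U ω ≤ ∑ j ∈ A, φ j ω * ζ j ω) :
    Integrable (fun ω => ∑ j ∈ A, φ j ω * ζ j ω) μ ∧
      ∫ ω, (∑ j ∈ A, φ j ω * ζ j ω) ∂μ = 0 := by
  set ξ : Ω → ℝ := fun ω => ∑ j ∈ A, φ j ω * ζ j ω with hξdef
  -- conditional expectation of each ζ j is 0
  have hcond : ∀ j ∈ A, (0 : Ω → ℝ) =ᵐ[μ] μ[ζ j|m] := by
    intro j hj
    refine ae_eq_condExp_of_forall_setIntegral_eq hm (hζi j hj) ?_ ?_ ?_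
    · intro s _ _; exact integrable_zero _ _ _
    · intro s hs _; simp [hζ0 j hj s hs]
    · exact ((stronglyMeasurable_const :
          StronglyMeasurable[m] fun _ : Ω => (0:ℝ))).aestronglyMeasurable
  -- integral of bounded m-measurable ψ times ζ j is zero
  have hbd0 : ∀ ψ : Ω → ℝ, Measurable[m] ψ → (∃ C : ℝ, ∀ ω, |ψ ω| ≤ C) →
      ∀ j ∈ A, Integrable (fun ω => ψ ω * ζ j ω) μ ∧ ∫ ω, ψ ω * ζ j ω ∂μ = 0 := by
    intro ψ hψ hψC j hj
    have hψm0 : AEStronglyMeasurable[m0] ψ μ :=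
      ((hψ.mono hm le_rfl).stronglyMeasurable).aestronglyMeasurable
    have hint : Integrable (fun ω => ψ ω * ζ j ω) μ := by
      obtain ⟨C, hC⟩ := hψC
      exact (hζi j hj).bdd_mul (c := C) hψm0
        (Eventually.of_forall fun ω => by simpa [Real.norm_eq_abs] using hC ω)
    refine ⟨hint, ?_⟩
    have hmul : μ[ψ * ζ j|m] =ᵐ[μ] ψ * μ[ζ j|m] :=
      condExp_mul_of_stronglyMeasurable_left (hψ.stronglyMeasurable) hint (hζi j hj)
    have h0 : μ[ψ * ζ j|m] =ᵐ[μ] (0 : Ω → ℝ) := by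
      filter_upwards [hmul, hcond j hj] with ω h1 h2
      simp [h1, Pi.mul_apply, ← h2]
    calc ∫ ω, ψ ω * ζ j ω ∂μ = ∫ ω, (μ[ψ * ζ j|m]) ω ∂μ := (integral_condExp hm).symm
      _ = 0 := by rw [integral_congr_ae h0]; simp
  -- truncation sets
  set An : ℕ → Set Ω := fun n => {ω | ∀ j ∈ A, |φ j ω| ≤ (n : ℝ)} with hAndef
  have hAnm : ∀ n, MeasurableSet[m] (An n) := by
    intro n
    have : An n = ⋂ j ∈ A, {ω | |φ j ω| ≤ (n : ℝ)} := by ext ω; simp [hAndef]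
    rw [this]
    exact MeasurableSet.biInter A.countable_toSet fun j hj =>
      measurableSet_le ((hφ j hj).abs) measurable_const
  have hAnm0 : ∀ n, MeasurableSet[m0] (An n) := fun n => hm _ (hAnm n)
  -- truncated gains
  set h : ℕ → Ω → ℝ := fun n => (An n).indicator ξ with hhdef
  have hheq : ∀ n ω, h n ω = ∑ j ∈ A, ((An n).indicator (φ j)) ω * ζ j ω := by
    intro n ω
    by_cases hω : ω ∈ An n
    · simp [hhdef, Set.indicator_of_mem hω, hξdef]
    · simp [hhdef, Set.indicator_of_notMem hω]
  have hterm : ∀ n, ∀ j ∈ A, Integrable (fun ω => ((An n).indicator (φ j)) ω * ζ j ω) μ ∧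
      ∫ ω, ((An n).indicator (φ j)) ω * ζ j ω ∂μ = 0 := by
    intro n j hj
    refine hbd0 _ ((hφ j hj).indicator (hAnm n)) ⟨(n : ℝ), fun ω => ?_⟩ j hj
    by_cases hω : ω ∈ An n
    · simpa [Set.indicator_of_mem hω] using hω j hj
    · simp [Set.indicator_of_notMem hω]
  have hhint : ∀ n, Integrable (h n) μ := by
    intro n
    have : Integrable (fun ω => ∑ j ∈ A, ((An n).indicator (φ j)) ω * ζ j ω) μ :=
      integrable_finset_sum A fun j hj => (hterm n j hj).1
    exact this.congr (by filter_upwards with ω using (hheq n ω).symm)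
  have hh0 : ∀ n, ∫ ω, h n ω ∂μ = 0 := by
    intro n
    rw [integral_congr_ae (Eventually.of_forall (hheq n)),
      integral_finset_sum A fun j hj => (hterm n j hj).1]
    exact Finset.sum_eq_zero fun j hj => (hterm n j hj).2
  -- pointwise convergence h n → ξ
  have htend : ∀ ω, Tendsto (fun n => h n ω) atTop (nhds (ξ ω)) := by
    intro ω
    have hev : ∀ᶠ n in atTop, h n ω = ξ ω := by
      refine eventually_atTop.2 ⟨⌈∑ j ∈ A, |φ j ω|⌉₊, fun n hn => ?_⟩
      have hω : ω ∈ An n := by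
        intro j hj
        calc |φ j ω| ≤ ∑ j ∈ A, |φ j ω| :=
              Finset.single_le_sum (fun k _ => abs_nonneg (φ k ω)) hj
          _ ≤ (⌈∑ j ∈ A, |φ j ω|⌉₊ : ℝ) := Nat.le_ceil _
          _ ≤ (n : ℝ) := by exact_mod_cast hn
      simp [hhdef, Set.indicator_of_mem hω]
    exact Tendsto.congr' (hev.mono fun _ e => e.symm) tendsto_const_nhds
  -- ξ is a.e. strongly measurable
  have hξm : AEStronglyMeasurable[m0] ξ μ := by
    refine Finset.aestronglyMeasurable_fun_sum A fun j hj => ?_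
    exact (((hφ j hj).mono hm le_rfl).stronglyMeasurable.aestronglyMeasurable).mul (hζi j hj).1
  -- integrability of ξ via Fatou
  have hξint : Integrable ξ μ := by
    set F : Ω → ℝ := fun ω => ξ ω + |U ω| with hFdef
    have hFm : AEStronglyMeasurable[m0] F μ := hξm.add hU.abs.1
    have hFnn : 0 ≤ᵐ[μ] F := by
      filter_upwards [hlb] with ω hω
      have : -|U ω| ≤ -U ω := neg_le_neg (le_abs_self _)
      simp only [hFdef, Pi.zero_apply]; linarith
    have hFn_int : ∀ n, Integrable (fun ω => h n ω + |U ω|) μ :=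
      fun n => (hhint n).add hU.abs
    have hFn_nn : ∀ n, 0 ≤ᵐ[μ] fun ω => h n ω + |U ω| := by
      intro n
      filter_upwards [hlb] with ω hω
      by_cases hmem : ω ∈ An n
      · have h1 : h n ω = ξ ω := by simp [hhdef, Set.indicator_of_mem hmem]
        have : -|U ω| ≤ -U ω := neg_le_neg (le_abs_self _)
        simp only [Pi.zero_apply, h1]; linarith
      · have h1 : h n ω = 0 := by simp [hhdef, Set.indicator_of_notMem hmem]
        simp only [Pi.zero_apply, h1, zero_add]
        exact abs_nonneg _
    have hFn_val : ∀ n, ∫⁻ ω, ENNReal.ofReal (h n ω + |U ω|) ∂μ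
        = ENNReal.ofReal (∫ ω, |U ω| ∂μ) := by
      intro n
      rw [← ofReal_integral_eq_lintegral_ofReal (hFn_int n) (hFn_nn n),
        integral_add (hhint n) hU.abs, hh0 n, zero_add]
    have hliminf : ∫⁻ ω, ENNReal.ofReal (F ω) ∂μ ≤ ENNReal.ofReal (∫ ω, |U ω| ∂μ) := by
      have hle : ∫⁻ ω, ENNReal.ofReal (F ω) ∂μ
          ≤ liminf (fun n => ∫⁻ ω, ENNReal.ofReal (h n ω + |U ω|) ∂μ) atTop := by
        have hptw : ∀ ω, ENNReal.ofReal (F ω)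
            = liminf (fun n => ENNReal.ofReal (h n ω + |U ω|)) atTop := by
          intro ω
          refine (Tendsto.liminf_eq ?_).symm
          exact (ENNReal.continuous_ofReal.tendsto _).comp ((htend ω).add tendsto_const_nhds)
        calc ∫⁻ ω, ENNReal.ofReal (F ω) ∂μ
            = ∫⁻ ω, liminf (fun n => ENNReal.ofReal (h n ω + |U ω|)) atTop ∂μ :=
              lintegral_congr fun ω => hptw ω
          _ ≤ liminf (fun n => ∫⁻ ω, ENNReal.ofReal (h n ω + |U ω|) ∂μ) atTop :=
              lintegral_liminf_le' fun n =>
                (ENNReal.measurable_ofReal.comp_aemeasurable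
                  ((hFn_int n).1.aemeasurable))
      calc ∫⁻ ω, ENNReal.ofReal (F ω) ∂μ
          ≤ liminf (fun n => ∫⁻ ω, ENNReal.ofReal (h n ω + |U ω|) ∂μ) atTop := hle
        _ = ENNReal.ofReal (∫ ω, |U ω| ∂μ) := by
            simp only [hFn_val]; exact liminf_const _
    have hFint : Integrable F μ := by
      refine ⟨hFm, ?_⟩
      rw [hasFiniteIntegral_iff_ofReal hFnn]
      exact lt_of_le_of_lt hliminf ENNReal.ofReal_lt_top
    have : ξ = fun ω => F ω - |U ω| := by funext ω; simp [hFdef]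
    rw [this]; exact hFint.sub hU.abs
  refine ⟨hξint, ?_⟩
  -- dominated convergence
  have hDCT : Tendsto (fun n => ∫ ω, h n ω ∂μ) atTop (nhds (∫ ω, ξ ω ∂μ)) := by
    refine tendsto_integral_of_dominated_convergence (fun ω => |ξ ω|)
      (fun n => (hhint n).1) hξint.abs ?_ ?_
    · intro n
      filter_upwards with ω
      by_cases hmem : ω ∈ An n
      · simp [hhdef, Set.indicator_of_mem hmem, Real.norm_eq_abs]
      · simp [hhdef, Set.indicator_of_notMem hmem, abs_nonneg]
    · exact Eventually.of_forall htend
  have hcf : (fun n => ∫ ω, h n ω ∂μ) = fun _ : ℕ => (0 : ℝ) := funext hh0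
  rw [hcf] at hDCT
  exact tendsto_nhds_unique hDCT tendsto_const_nhds


/-- In finite discrete time, the terminal gain of a predictable strategy which is
bounded below by (minus) an integrable function is integrable with zero expectation,
under a martingale measure. -/
lemma gains_integrable_integral_zero {Ω : Type*} [m0 : MeasurableSpace Ω] (μ : Measure Ω)
    [IsProbabilityMeasure μ] (G : ℕ → MeasurableSpace Ω) (hGmono : Monotone G)
    (hGle : ∀ t, G t ≤ m0) (T : ℕ) {ι : Type*} (A : Finset ι) (X : ι → ℕ → Ω → ℝ)
    (hXad : ∀ j ∈ A, ∀ t, t ≤ T → Measurable[G t] (X j t))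
    (hXint : ∀ j ∈ A, ∀ t, t ≤ T → Integrable (X j t) μ)
    (hmart : ∀ j ∈ A, ∀ t, 1 ≤ t → t ≤ T → ∀ s : Set Ω, MeasurableSet[G (t-1)] s →
      ∫ ω in s, X j t ω ∂μ = ∫ ω in s, X j (t-1) ω ∂μ)
    (H : ι → ℕ → Ω → ℝ) (hH : ∀ j ∈ A, ∀ t, Measurable[G (t-1)] (H j t))
    (W : Ω → ℝ) (hW : Integrable W μ)
    (hlb : ∀ᵐ ω ∂μ, -W ω ≤ ∑ t ∈ Finset.Icc 1 T, ∑ j ∈ A, H j t ω * (X j t ω - X j (t-1) ω)) :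
    Integrable (fun ω => ∑ t ∈ Finset.Icc 1 T, ∑ j ∈ A, H j t ω * (X j t ω - X j (t-1) ω)) μ ∧
    ∫ ω, (∑ t ∈ Finset.Icc 1 T, ∑ j ∈ A, H j t ω * (X j t ω - X j (t-1) ω)) ∂μ = 0 := by
  set ξ : ℕ → Ω → ℝ := fun t ω => ∑ j ∈ A, H j t ω * (X j t ω - X j (t-1) ω) with hξdef
  set V : ℕ → Ω → ℝ := fun r ω => ∑ t ∈ Finset.Icc 1 r, ξ t ω with hVdef
  have hVmeas : ∀ r, r ≤ T → Measurable[G r] (V r) := by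
    intro r hr
    refine Finset.measurable_sum _ fun t ht => ?_
    obtain ⟨ht1, ht2⟩ := Finset.mem_Icc.mp ht
    refine Finset.measurable_sum _ fun j hj => ?_
    have h1 : Measurable[G r] (H j t) :=
      (hH j hj t).mono (hGmono (le_trans (Nat.sub_le t 1) ht2)) le_rfl
    have h2 : Measurable[G r] (X j t) :=
      (hXad j hj t (le_trans ht2 hr)).mono (hGmono ht2) le_rfl
    have h3 : Measurable[G r] (X j (t-1)) :=
      (hXad j hj (t-1) (le_trans (Nat.sub_le t 1) (le_trans ht2 hr))).mono
        (hGmono (le_trans (Nat.sub_le t 1) ht2)) le_rfl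
    exact h1.mul (h2.sub h3)
  set c : ℕ → Ω → ℝ := fun r => μ[(fun ω => |W ω|)|G r] with hcdef
  have hc_int : ∀ r, Integrable (c r) μ := fun r => integrable_condExp
  have hc_meas : ∀ r, StronglyMeasurable[G r] (c r) := fun r => stronglyMeasurable_condExp
  have hVsucc : ∀ p : ℕ, V (p + 1) = fun ω => V p ω + ξ (p + 1) ω := by
    intro p; funext ω
    simp only [hVdef]
    exact Finset.sum_Icc_succ_top (Nat.succ_le_succ (Nat.zero_le p)) _
  -- value of ξ (p+1) as a combination for lemOS
  have hξsucc : ∀ p : ℕ, ξ (p + 1) = fun ω => ∑ j ∈ A, H j (p+1) ω * (X j (p+1) ω - X j p ω) := by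
    intro p; funext ω; simp [hξdef]
  -- martingale-difference facts at step p+1 ≤ T
  have hζi : ∀ p : ℕ, p + 1 ≤ T → ∀ j ∈ A,
      Integrable (fun ω => X j (p+1) ω - X j p ω) μ := fun p hp j hj =>
    (hXint j hj (p+1) hp).sub (hXint j hj p (le_trans (Nat.le_succ p) hp))
  have hζ0 : ∀ p : ℕ, p + 1 ≤ T → ∀ j ∈ A, ∀ s : Set Ω, MeasurableSet[G p] s →
      ∫ ω in s, (X j (p+1) ω - X j p ω) ∂μ = 0 := by
    intro p hp j hj s hs
    have h1 : ∫ ω in s, X j (p+1) ω ∂μ = ∫ ω in s, X j p ω ∂μ := by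
      have := hmart j hj (p+1) (Nat.succ_le_succ (Nat.zero_le p)) hp s (by simpa using hs)
      simpa using this
    rw [integral_sub ((hXint j hj (p+1) hp).integrableOn)
      ((hXint j hj p (le_trans (Nat.le_succ p) hp)).integrableOn), h1, sub_self]
  have hHp : ∀ p : ℕ, ∀ j ∈ A, Measurable[G p] (H j (p+1)) := by
    intro p j hj
    have := hH j hj (p+1)
    simpa using this
  -- backward induction: V r ≥ -c r a.e.
  have base : ∀ᵐ ω ∂μ, -(c T ω) ≤ V T ω := by
    set g : Ω → ℝ := fun ω => min (V T ω) 0 with hgdef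
    have hgmeas : Measurable[G T] g := (hVmeas T le_rfl).min measurable_const
    have hgm0 : AEStronglyMeasurable g μ :=
      ((hgmeas.mono (hGle T) le_rfl).stronglyMeasurable).aestronglyMeasurable
    have hgbd : ∀ᵐ ω ∂μ, ‖g ω‖ ≤ |W ω| := by
      filter_upwards [hlb] with ω hω
      have hVT : -W ω ≤ V T ω := hω
      rw [Real.norm_eq_abs, abs_le]
      constructor
      · refine le_min (le_trans (neg_le_neg (le_abs_self _)) hVT) ?_
        simp [abs_nonneg]
      · exact le_trans (min_le_right _ _) (abs_nonneg _)
    have hgint : Integrable g μ := Integrable.mono' hW.abs hgm0 hgbd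
    have hglb : ∀ᵐ ω ∂μ, (fun ω => -|W ω|) ω ≤ g ω := by
      filter_upwards [hlb] with ω hω
      exact le_min (le_trans (neg_le_neg (le_abs_self _)) hω) (by simp [abs_nonneg])
    have hce : μ[g|G T] = g :=
      condExp_of_stronglyMeasurable (hGle T) hgmeas.stronglyMeasurable hgint
    have hmono : μ[(fun ω => -|W ω|)|G T] ≤ᵐ[μ] μ[g|G T] :=
      condExp_mono (hW.abs.neg) hgint hglb
    have hneg : μ[(fun ω => -|W ω|)|G T] =ᵐ[μ] fun ω => -(c T ω) := by
      have : (fun ω => -|W ω|) = -(fun ω => |W ω|) := by funext ω; simp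
      rw [this]
      exact condExp_neg _ _
    filter_upwards [hmono, hneg] with ω h1 h2
    rw [hce] at h1
    calc -(c T ω) = (μ[(fun ω => -|W ω|)|G T]) ω := h2.symm
      _ ≤ g ω := h1
      _ ≤ V T ω := min_le_left _ _
  have step : ∀ p : ℕ, p + 1 ≤ T → (∀ᵐ ω ∂μ, -(c (p+1) ω) ≤ V (p+1) ω) →
      ∀ᵐ ω ∂μ, -(c p ω) ≤ V p ω := by
    intro p hp ih
    set B : Set Ω := {ω | V p ω + c p ω < 0} with hBdef
    have hB : MeasurableSet[G p] B := by
      have : Measurable[G p] (fun ω => V p ω + c p ω) :=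
        (hVmeas p (le_trans (Nat.le_succ p) hp)).add (hc_meas p).measurable
      exact measurableSet_lt this measurable_const
    have hBm0 : MeasurableSet[m0] B := hGle p _ hB
    -- apply lemOS to the indicator-truncated step gain
    have hOS := lemOS (hGle p) A (fun j => B.indicator (H j (p+1)))
      (fun j ω => X j (p+1) ω - X j p ω)
      (fun j hj => (hHp p j hj).indicator hB)
      (fun j hj => hζi p hp j hj)
      (fun j hj s hs => hζ0 p hp j hj s hs)
      (fun ω => |c p ω| + |c (p+1) ω|) ((hc_int p).abs.add (hc_int (p+1)).abs) ?lb
    case lb =>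
      filter_upwards [ih] with ω hω
      by_cases hmem : ω ∈ B
      · have hsum : ∑ j ∈ A, (B.indicator (H j (p+1))) ω * (X j (p+1) ω - X j p ω)
            = ξ (p+1) ω := by
          rw [hξsucc p]
          exact Finset.sum_congr rfl fun j hj => by rw [Set.indicator_of_mem hmem]
        have hVp : V p ω + c p ω < 0 := hmem
        have hξval : ξ (p+1) ω = V (p+1) ω - V p ω := by rw [hVsucc p]; ring
        rw [hsum, hξval]
        have h1 : -(c (p+1) ω) ≤ V (p+1) ω := hω
        have h2 : -(|c p ω|) ≤ c p ω := neg_abs_le _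
        have h3 : -(|c (p+1) ω|) ≤ -(c (p+1) ω) → True := fun _ => trivial
        have h4 : c (p+1) ω ≤ |c (p+1) ω| := le_abs_self _
        linarith
      · have hsum : ∑ j ∈ A, (B.indicator (H j (p+1))) ω * (X j (p+1) ω - X j p ω)
            = 0 := Finset.sum_eq_zero fun j hj => by
            rw [Set.indicator_of_notMem hmem, zero_mul]
        rw [hsum]
        have := abs_nonneg (c p ω); have := abs_nonneg (c (p+1) ω); linarith
    obtain ⟨hξ'int, hξ'zero⟩ := hOS
    -- the compensator D
    set D : Ω → ℝ := B.indicator (fun ω => c p ω - c (p+1) ω) with hDdef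
    have hDint : Integrable D μ := ((hc_int p).sub (hc_int (p+1))).indicator hBm0
    have hDzero : ∫ ω, D ω ∂μ = 0 := by
      rw [hDdef, integral_indicator hBm0,
        integral_sub ((hc_int p).integrableOn) ((hc_int (p+1)).integrableOn)]
      have e1 : ∫ ω in B, c p ω ∂μ = ∫ ω in B, |W ω| ∂μ :=
        setIntegral_condExp (hGle p) hW.abs hB
      have e2 : ∫ ω in B, c (p+1) ω ∂μ = ∫ ω in B, |W ω| ∂μ :=
        setIntegral_condExp (hGle (p+1)) hW.abs (hGmono (Nat.le_succ p) _ hB)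
      rw [e1, e2, sub_self]
    -- f0 := ξ' - D is nonneg a.e. with zero integral
    set f0 : Ω → ℝ := fun ω =>
      (∑ j ∈ A, (B.indicator (H j (p+1))) ω * (X j (p+1) ω - X j p ω)) - D ω with hf0def
    have hf0int : Integrable f0 μ := hξ'int.sub hDint
    have hf0zero : ∫ ω, f0 ω ∂μ = 0 := by
      rw [hf0def]
      rw [integral_sub hξ'int hDint, hξ'zero, hDzero, sub_self]
    have hf0nn : 0 ≤ᵐ[μ] f0 := by
      filter_upwards [ih] with ω hω
      simp only [hf0def, Pi.zero_apply]
      by_cases hmem : ω ∈ B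
      · have hsum : ∑ j ∈ A, (B.indicator (H j (p+1))) ω * (X j (p+1) ω - X j p ω)
            = ξ (p+1) ω := by
          rw [hξsucc p]
          exact Finset.sum_congr rfl fun j hj => by rw [Set.indicator_of_mem hmem]
        have hVp : V p ω + c p ω < 0 := hmem
        have hξval : ξ (p+1) ω = V (p+1) ω - V p ω := by rw [hVsucc p]; ring
        have hD : D ω = c p ω - c (p+1) ω := Set.indicator_of_mem hmem _
        rw [hsum, hξval, hD]
        have h1 : -(c (p+1) ω) ≤ V (p+1) ω := hω
        linarith
      · have hsum : ∑ j ∈ A, (B.indicator (H j (p+1))) ω * (X j (p+1) ω - X j p ω)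
            = 0 := Finset.sum_eq_zero fun j hj => by
            rw [Set.indicator_of_notMem hmem, zero_mul]
        have hD : D ω = 0 := Set.indicator_of_notMem hmem _
        rw [hsum, hD, sub_zero]
    have hf0eq0 : f0 =ᵐ[μ] 0 :=
      (integral_eq_zero_iff_of_nonneg_ae hf0nn hf0int).mp hf0zero
    -- conclude a.e. not in B
    filter_upwards [ih, hf0eq0] with ω hω hf0ω
    by_contra hcon
    push_neg at hcon
    have hmem : ω ∈ B := by
      simp only [hBdef, Set.mem_setOf_eq]; linarith
    have hsum : ∑ j ∈ A, (B.indicator (H j (p+1))) ω * (X j (p+1) ω - X j p ω)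
        = ξ (p+1) ω := by
      rw [hξsucc p]
      exact Finset.sum_congr rfl fun j hj => by rw [Set.indicator_of_mem hmem]
    have hVp : V p ω + c p ω < 0 := hmem
    have hξval : ξ (p+1) ω = V (p+1) ω - V p ω := by rw [hVsucc p]; ring
    have hD : D ω = c p ω - c (p+1) ω := Set.indicator_of_mem hmem _
    have : f0 ω = 0 := hf0ω
    simp only [hf0def] at this
    rw [hsum, hξval, hD] at this
    have h1 : -(c (p+1) ω) ≤ V (p+1) ω := hω
    linarith
  have zero_case : ∀ᵐ ω ∂μ, -(c 0 ω) ≤ V 0 ω := by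
    have hcnn : 0 ≤ᵐ[μ] c 0 := condExp_nonneg (Eventually.of_forall fun ω => abs_nonneg _)
    filter_upwards [hcnn] with ω hω
    have hω' : (0:ℝ) ≤ c 0 ω := hω
    have : V 0 ω = 0 := by simp [hVdef]
    rw [this]
    linarith
  have back : ∀ r, r ≤ T → ∀ᵐ ω ∂μ, -(c r ω) ≤ V r ω := by
    have key : ∀ d : ℕ, ∀ᵐ ω ∂μ, -(c (T - d) ω) ≤ V (T - d) ω := by
      intro d
      induction d with
      | zero => simpa using base
      | succ d ih =>
        rcases Nat.eq_zero_or_pos (T - d) with h0 | hpos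
        · have : T - (d+1) = 0 := by omega
          rw [this]; exact zero_case
        · have heq : T - d = (T - (d+1)) + 1 := by omega
          have hle : (T - (d+1)) + 1 ≤ T := by omega
          rw [heq] at ih
          exact step (T - (d+1)) hle ih
    intro r hr
    have : r = T - (T - r) := by omega
    rw [this]
    exact key (T - r)
  -- forward induction: integrability and zero integral
  have fwd : ∀ r, r ≤ T → Integrable (V r) μ ∧ ∫ ω, V r ω ∂μ = 0 := by
    intro r
    induction r with
    | zero =>
      intro _
      have : V 0 = fun _ => (0 : ℝ) := by funext ω; simp [hVdef]
      rw [this]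
      exact ⟨integrable_const 0, by simp⟩
    | succ p ih =>
      intro hp
      obtain ⟨hVint, hVzero⟩ := ih (le_trans (Nat.le_succ p) hp)
      have hOS := lemOS (hGle p) A (fun j => H j (p+1))
        (fun j ω => X j (p+1) ω - X j p ω)
        (fun j hj => hHp p j hj)
        (fun j hj => hζi p hp j hj)
        (fun j hj s hs => hζ0 p hp j hj s hs)
        (fun ω => c (p+1) ω + V p ω) ((hc_int (p+1)).add hVint) ?lb2
      case lb2 =>
        filter_upwards [back (p+1) hp] with ω hω
        have hξval : (∑ j ∈ A, H j (p+1) ω * (X j (p+1) ω - X j p ω)) = ξ (p+1) ω := by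
          rw [hξsucc p]
        rw [hξval]
        have : V (p+1) ω = V p ω + ξ (p+1) ω := by rw [hVsucc p]
        rw [this] at hω
        linarith
      obtain ⟨hξint, hξzero⟩ := hOS
      have hVeq : V (p+1) = fun ω => V p ω +
          ∑ j ∈ A, H j (p+1) ω * (X j (p+1) ω - X j p ω) := by
        rw [hVsucc p, hξsucc p]
      constructor
      · rw [hVeq]; exact hVint.add hξint
      · rw [hVeq, integral_add hVint hξint, hVzero, hξzero, add_zero]
  have hfinal := fwd T le_rfl
  have hVT : (fun ω => ∑ t ∈ Finset.Icc 1 T, ∑ j ∈ A, H j t ω * (X j t ω - X j (t-1) ω))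
      = V T := by funext ω; simp [hVdef, hξdef]
  rw [hVT]
  exact hfinal


/-- Bounded-density `withDensity` measures preserve integrability. -/
lemma integrable_withDensity_of_bdd {Ω : Type*} [m0 : MeasurableSpace Ω] {μ : Measure Ω}
    {z : Ω → ℝ} (hz : Measurable z) (hz0 : ∀ ω, 0 ≤ z ω) {C : ℝ} (hzC : ∀ ω, z ω ≤ C)
    {f : Ω → ℝ} (hf : Integrable f μ) :
    Integrable f (μ.withDensity fun ω => ENNReal.ofReal (z ω)) := by
  rw [integrable_withDensity_iff (hz.ennreal_ofReal)
    (Eventually.of_forall fun ω => ENNReal.ofReal_lt_top)]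
  have heq : (fun x => f x * (ENNReal.ofReal (z x)).toReal) = fun x => z x * f x := by
    funext x
    rw [ENNReal.toReal_ofReal (hz0 x)]
    ring
  rw [heq]
  refine hf.bdd_mul (c := C) (hz.aestronglyMeasurable) ?_
  filter_upwards with ω
  rw [Real.norm_eq_abs, abs_le]
  exact ⟨by linarith [hz0 ω, hzC ω], hzC ω⟩

variable {Ω : Type*} [m0 : MeasurableSpace Ω] (M : Market Ω)

/-- Elements of `Ki` are `F^i_T`-measurable. -/
lemma Ki_measurable {i : Fin M.N} {k : Ω → ℝ} (hk : k ∈ Ki M i) :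
    Measurable[M.Fi i M.T] k := by
  obtain ⟨H, hH, rfl⟩ := hk
  refine Finset.measurable_sum _ fun j hj => ?_
  refine Finset.measurable_sum _ fun t ht => ?_
  obtain ⟨ht1, ht2⟩ := Finset.mem_Icc.mp ht
  have h1 : Measurable[M.Fi i M.T] (H j t) :=
    (hH j hj t).mono (M.Fi_mono i (le_trans (Nat.sub_le t 1) ht2)) le_rfl
  have h2 : Measurable[M.Fi i M.T] (M.X j t) :=
    (M.Xi_adapted i j hj t ht2).mono (M.Fi_mono i ht2) le_rfl
  have h3 : Measurable[M.Fi i M.T] (M.X j (t-1)) :=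
    (M.Xi_adapted i j hj (t-1) (le_trans (Nat.sub_le t 1) ht2)).mono
      (M.Fi_mono i (le_trans (Nat.sub_le t 1) ht2)) le_rfl
  exact h1.mul (h2.sub h3)

/-- (i) a strictly positive element of `(C^𝒴)⁰` implies `NCA(𝒴)`;
in particular `(C^𝒴)⁰₁ ∩ 𝒫ᴺₑ ≠ ∅` implies `NCA(𝒴)`; (ii) if `𝒴 ⊆ ⨉ᵢ L¹` and
`M^𝒴 ∩ 𝒫ᴺₑ ≠ ∅` then `NCA(𝒴)` holds. -/
theorem positive_polar_implies_nca (Ys : Set (Fin M.N → Ω → ℝ)) (hY : IsExchangeSet M Ys) :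
    ((∃ z ∈ polar M Ys, ∀ i, ∀ᵐ ω ∂M.P, 0 < z i ω) → NCA M Ys) ∧
    ((∃ Q ∈ polarOne M Ys, ∀ i, EquivToP M (Q i)) → NCA M Ys) ∧
    ((∀ Y ∈ Ys, ∀ i, Integrable (Y i) M.P) →
      (∃ Q ∈ MY M Ys, ∀ i, EquivToP M (Q i)) → NCA M Ys) := by
  haveI : IsProbabilityMeasure M.P := M.hProb
  have hFiT : ∀ i : Fin M.N, M.Fi i M.T ≤ m0 :=
    fun i => (M.Fi_le i M.T).trans (M.F_le M.T)
  -- Part (i)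
  have part1 : (∃ z ∈ polar M Ys, ∀ i, ∀ᵐ ω ∂M.P, 0 < z i ω) → NCA M Ys := by
    rintro ⟨z, hz, hzpos⟩ k hk Y hYmem hnn i
    have hkmeas : ∀ i, Measurable[M.Fi i M.T] (k i) := fun i => Ki_measurable M (hk i)
    have hYmeas : ∀ i, Measurable[M.Fi i M.T] (Y i) := fun i => hY.2 Y hYmem i
    set f : Fin M.N → Ω → ℝ := fun i ω => min (k i ω + Y i ω) 1 with hfdef
    have hfKY : f ∈ KY M Ys := by
      refine ⟨k, fun i ω => k i ω + Y i ω - min (k i ω + Y i ω) 1, Y, hk, fun i => ?_, hYmem, ?_⟩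
      · constructor
        · exact ((hkmeas i).add (hYmeas i)).sub
            (((hkmeas i).add (hYmeas i)).min measurable_const)
        · filter_upwards with ω
          have := min_le_left (k i ω + Y i ω) 1
          linarith
      · funext i ω
        simp only [hfdef]
        ring
    have hfint : ∀ i, Integrable (f i) M.P := by
      intro i
      have hm : Measurable[M.Fi i M.T] (f i) :=
        ((hkmeas i).add (hYmeas i)).min measurable_const
      refine Integrable.mono' (integrable_const (1:ℝ))
        ((hm.mono (hFiT i) le_rfl).stronglyMeasurable.aestronglyMeasurable) ?_
      filter_upwards [hnn i] with ω hω
      rw [Real.norm_eq_abs, abs_le]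
      exact ⟨by simp only [hfdef]; exact le_min (by linarith) (by norm_num), min_le_right _ _⟩
    have hpolar : (∑ i, ∫ ω, z i ω * f i ω ∂M.P) ≤ 0 := hz.2 f ⟨hfKY, hfint⟩
    have hzint : ∀ i, Integrable (fun ω => z i ω * f i ω) M.P := by
      intro i
      obtain ⟨C, hC⟩ := (hz.1 i).2
      refine (hfint i).bdd_mul (c := C) ((((hz.1 i).1.mono (hFiT i)
        le_rfl)).stronglyMeasurable.aestronglyMeasurable) ?_
      filter_upwards [hC] with ω hω
      rwa [Real.norm_eq_abs]
    have hterm_nn : ∀ i, 0 ≤ ∫ ω, z i ω * f i ω ∂M.P := by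
      intro i
      refine integral_nonneg_of_ae ?_
      filter_upwards [hzpos i, hnn i] with ω h1 h2
      exact mul_nonneg h1.le (le_min h2 (by norm_num))
    have hall0 : ∀ i, ∫ ω, z i ω * f i ω ∂M.P = 0 := by
      have hsum0 : (∑ i, ∫ ω, z i ω * f i ω ∂M.P) = 0 :=
        le_antisymm hpolar (Finset.sum_nonneg fun i _ => hterm_nn i)
      intro i
      exact (Finset.sum_eq_zero_iff_of_nonneg fun i _ => hterm_nn i).mp hsum0 i
        (Finset.mem_univ i)
    have hzf0 : (fun ω => z i ω * f i ω) =ᵐ[M.P] 0 := by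
      refine (integral_eq_zero_iff_of_nonneg_ae ?_ (hzint i)).mp (hall0 i)
      filter_upwards [hzpos i, hnn i] with ω h1 h2
      exact mul_nonneg h1.le (le_min h2 (by norm_num))
    filter_upwards [hzf0, hzpos i, hnn i] with ω h0 h1 h2
    have hf0 : f i ω = 0 := by
      have : z i ω * f i ω = 0 := h0
      rcases mul_eq_zero.mp this with h | h
      · exact absurd h (ne_of_gt h1)
      · exact h
    by_contra hne
    have hpos : 0 < k i ω + Y i ω := lt_of_le_of_ne h2 (Ne.symm hne)
    have : 0 < f i ω := lt_min hpos (by norm_num)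
    simp only [hf0, lt_irrefl] at this
  refine ⟨part1, ?_, ?_⟩
  · -- Part (i')
    rintro ⟨Q, ⟨z, hzpolar, hznn, hQprop⟩, hQe⟩
    refine part1 ⟨z, hzpolar, fun i => ?_⟩
    obtain ⟨hQprob, hQeq⟩ := hQprop i
    have hzi_meas : Measurable (z i) := (hzpolar.1 i).1.mono (hFiT i) le_rfl
    set A : Set Ω := {ω | z i ω ≤ 0} with hAdef
    have hA : MeasurableSet A := measurableSet_le hzi_meas measurable_const
    have hQA : Q i A = 0 := by
      rw [hQeq, withDensity_apply _ hA]
      have : ∫⁻ ω in A, ENNReal.ofReal (z i ω) ∂M.P = ∫⁻ _ in A, 0 ∂M.P := by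
        refine setLIntegral_congr_fun hA (fun ω hω => ?_)
        exact ENNReal.ofReal_eq_zero.mpr hω
      rw [this, lintegral_zero]
    have hPA : M.P A = 0 := (hQe i).2 hQA
    rw [ae_iff]
    convert hPA using 2
    ext ω
    simp [hAdef, not_lt]
  · -- Part (ii)
    rintro hYL1 ⟨Q, ⟨hQMi, hQpol⟩, hQe⟩ k hk Y hYmem hnn
    have key : ∀ i : Fin M.N,
        Integrable (fun ω => k i ω + Y i ω) (Q i) ∧
        (∫ ω, (k i ω + Y i ω) ∂(Q i)) = ∫ ω, Y i ω ∂(Q i) ∧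
        (∀ᵐ ω ∂(Q i), 0 ≤ k i ω + Y i ω) ∧ M.P ≪ Q i := by
      intro i
      obtain ⟨hQprob, ⟨z, hzmeas, hz0, ⟨C, hzC⟩, hQeq⟩, hmartfull⟩ := hQMi i
      have hQP : Q i ≪ M.P := by
        rw [hQeq]; exact withDensity_absolutelyContinuous _ _
      have hPQ : M.P ≪ Q i := (hQe i).2
      have hYint_P : Integrable (Y i) M.P := hYL1 Y hYmem i
      have hYint_Q : Integrable (Y i) (Q i) := by
        rw [hQeq]
        exact integrable_withDensity_of_bdd (hzmeas.mono (hFiT i) le_rfl) hz0 hzC hYint_P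
      have hnnQ : ∀ᵐ ω ∂(Q i), 0 ≤ k i ω + Y i ω := (hnn i).filter_mono hQP.ae_le
      haveI : IsProbabilityMeasure (Q i) := hQprob
      obtain ⟨H, hH, hkeq⟩ := hk i
      have hlbQ : ∀ᵐ ω ∂(Q i), -(Y i ω) ≤ ∑ t ∈ Finset.Icc 1 M.T, ∑ j ∈ M.assets i,
          H j t ω * (M.X j t ω - M.X j (t-1) ω) := by
        filter_upwards [hnnQ] with ω hω
        have hkval : k i ω = ∑ t ∈ Finset.Icc 1 M.T, ∑ j ∈ M.assets i,
            H j t ω * (M.X j t ω - M.X j (t-1) ω) := by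
          rw [hkeq]
          exact Finset.sum_comm
        rw [← hkval]
        linarith
      have hgains := gains_integrable_integral_zero (Q i) (M.Fi i) (M.Fi_mono i)
        (fun t => (M.Fi_le i t).trans (M.F_le t)) M.T (M.assets i) M.X
        (fun j hj t ht => M.Xi_adapted i j hj t ht)
        (fun j hj t ht => (hmartfull j hj).1 t ht)
        (fun j hj t h1 h2 s hs => (hmartfull j hj).2 t h1 h2 s hs)
        H hH (Y i) hYint_Q hlbQ
      obtain ⟨hkint', hkzero'⟩ := hgains
      have hkfun : k i = fun ω => ∑ t ∈ Finset.Icc 1 M.T, ∑ j ∈ M.assets i,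
          H j t ω * (M.X j t ω - M.X j (t-1) ω) := by
        funext ω
        rw [hkeq]
        exact Finset.sum_comm
      have hkint : Integrable (k i) (Q i) := by rw [hkfun]; exact hkint'
      have hkzero : ∫ ω, k i ω ∂(Q i) = 0 := by rw [hkfun]; exact hkzero'
      refine ⟨hkint.add hYint_Q, ?_, hnnQ, hPQ⟩
      rw [integral_add hkint hYint_Q, hkzero, zero_add]
    have hsumY : (∑ i, ∫ ω, Y i ω ∂(Q i)) ≤ 0 :=
      hQpol Y hYmem (fun i => hYL1 Y hYmem i)
    have hterm_nn : ∀ i : Fin M.N, 0 ≤ ∫ ω, (k i ω + Y i ω) ∂(Q i) :=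
      fun i => integral_nonneg_of_ae (key i).2.2.1
    have hsum0 : (∑ i, ∫ ω, (k i ω + Y i ω) ∂(Q i)) = 0 := by
      refine le_antisymm ?_ (Finset.sum_nonneg fun i _ => hterm_nn i)
      calc (∑ i, ∫ ω, (k i ω + Y i ω) ∂(Q i)) = ∑ i, ∫ ω, Y i ω ∂(Q i) :=
            Finset.sum_congr rfl fun i _ => (key i).2.1
        _ ≤ 0 := hsumY
    intro i
    have hzero : ∫ ω, (k i ω + Y i ω) ∂(Q i) = 0 :=
      (Finset.sum_eq_zero_iff_of_nonneg fun i _ => hterm_nn i).mp hsum0 i (Finset.mem_univ i)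
    have hae : (fun ω => k i ω + Y i ω) =ᵐ[Q i] 0 :=
      (integral_eq_zero_iff_of_nonneg_ae (key i).2.2.1 (key i).1).mp hzero
    exact hae.filter_mono (key i).2.2.2.ae_le


end Collective
end
end

section
/- Suppose 𝒴 is a convex cone containing ℝ^N_0 := { x ∈ ℝ^N : ∑_i x^i = 0 } and NCA(𝒴) holds. Then: (1) ρ^𝒴_+(0) = 0; (2) ρ^𝒴_+ is cash additive: ρ^𝒴_+(g + c) = ρ^𝒴_+(g) + ∑_{i=1}^N c^i for every c ∈ ℝ^N; (3) ρ^𝒴_+ is monotone: if g^i ≤ h^i P-a.s. for all i then ρ^𝒴_+(g) ≤ ρ^𝒴_+(h); (4) for P-essentially bounded g, ρ^𝒴_+(g) is finite and |ρ^𝒴_+(g)| ≤ ∑_{i=1}^N ‖g^i‖_∞; (5) ρ^𝒴_+ = ρ^{𝒴+ℝ^N_0}_+. Moreover (2), (3) and (5) hold for any set of exchanges 𝒴 with 0 ∈ 𝒴, without assuming NCA(𝒴) or the cone condition. -/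
open MeasureTheory Filter
open scoped ENNReal

noncomputable section

namespace Collective

variable {Ω : Type*} [m0 : MeasurableSpace Ω] (M : Market Ω)

/-! ### Auxiliary lemmas -/

lemma sInf_image_add_le (S : Set EReal) (r : ℝ) :
    sInf S + (r : EReal) ≤ sInf ((fun x => x + (r : EReal)) '' S) := by
  refine le_sInf ?_
  rintro y ⟨x, hx, rfl⟩
  exact add_le_add_left (sInf_le hx) _

lemma sInf_image_add (S : Set EReal) (r : ℝ) :
    sInf ((fun x => x + (r : EReal)) '' S) = sInf S + (r : EReal) := by
  refine le_antisymm ?_ (sInf_image_add_le S r)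
  have h2 := sInf_image_add_le ((fun x => x + (r : EReal)) '' S) (-r)
  have himg : (fun x => x + ((-r : ℝ) : EReal)) '' ((fun x => x + (r : EReal)) '' S) = S := by
    rw [Set.image_image]
    have : ∀ x : EReal, x + (r : EReal) + ((-r : ℝ) : EReal) = x := by
      intro x
      rw [EReal.coe_neg, ← sub_eq_add_neg]
      exact EReal.add_sub_cancel_right
    simp only [this, Set.image_id']
  rw [himg] at h2
  calc sInf ((fun x => x + (r : EReal)) '' S)
      = sInf ((fun x => x + (r : EReal)) '' S) + ((-r : ℝ) : EReal) + (r : EReal) := by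
        rw [EReal.coe_neg, ← sub_eq_add_neg, EReal.sub_add_cancel]
    _ ≤ sInf S + (r : EReal) := add_le_add_left h2 _

lemma zero_mem_Ki (i : Fin M.N) : (fun _ => (0 : ℝ)) ∈ Ki M i := by
  refine ⟨fun _ _ _ => 0, fun j hj t => measurable_const, ?_⟩
  funext ω; simp

lemma rhoY_add_const (Ys : Set (Fin M.N → Ω → ℝ)) (g : Fin M.N → Ω → ℝ) (c : Fin M.N → ℝ) :
    rhoY M Ys (fun i ω => g i ω + c i) = rhoY M Ys g + ((∑ i, c i : ℝ) : EReal) := by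
  rw [rhoY, rhoY, ← sInf_image_add]
  congr 1
  ext x
  constructor
  · rintro ⟨m, ⟨k, hk, Y, hYm, hfe⟩, rfl⟩
    refine ⟨((∑ i, (m i - c i) : ℝ) : EReal),
      ⟨fun i => m i - c i, ⟨k, hk, Y, hYm,
        fun i => (hfe i).mono fun ω h => by dsimp only at h ⊢; linarith⟩, rfl⟩, ?_⟩
    dsimp only
    rw [← EReal.coe_add, EReal.coe_eq_coe_iff, Finset.sum_sub_distrib]
    ring
  · rintro ⟨y, ⟨m, ⟨k, hk, Y, hYm, hfe⟩, rfl⟩, rfl⟩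
    refine ⟨fun i => m i + c i,
      ⟨k, hk, Y, hYm, fun i => (hfe i).mono fun ω h => by dsimp only at h ⊢; linarith⟩, ?_⟩
    dsimp only
    rw [← EReal.coe_add, EReal.coe_eq_coe_iff, Finset.sum_add_distrib]

lemma rhoY_mono' (Ys : Set (Fin M.N → Ω → ℝ)) (g h : Fin M.N → Ω → ℝ)
    (hle : ∀ i, ∀ᵐ ω ∂M.P, g i ω ≤ h i ω) : rhoY M Ys g ≤ rhoY M Ys h := by
  refine sInf_le_sInf ?_
  rintro x ⟨m, ⟨k, hk, Y, hYm, hfe⟩, rfl⟩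
  exact ⟨m, ⟨k, hk, Y, hYm,
    fun i => ((hle i).and (hfe i)).mono fun ω hw => hw.1.trans hw.2⟩, rfl⟩

lemma rhoY_plusR0 (Ys : Set (Fin M.N → Ω → ℝ)) (g : Fin M.N → Ω → ℝ) :
    rhoY M Ys g = rhoY M (plusR0 M Ys) g := by
  unfold rhoY
  congr 1
  ext v
  constructor
  · rintro ⟨m, ⟨k, hk, Y, hYm, hfe⟩, rfl⟩
    refine ⟨m, ⟨k, hk, Y, ⟨Y, hYm, fun _ => 0, by simp, by funext i ω; simp⟩, hfe⟩, rfl⟩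
  · rintro ⟨m, ⟨k, hk, Z, ⟨Y, hYm, x, hx0, rfl⟩, hfe⟩, rfl⟩
    refine ⟨fun i => m i + x i, ⟨k, hk, Y, hYm,
      fun i => (hfe i).mono fun ω h => by dsimp at h ⊢; linarith⟩, ?_⟩
    rw [EReal.coe_eq_coe_iff, Finset.sum_add_distrib, hx0, add_zero]

lemma rhoY_zero (Ys : Set (Fin M.N → Ω → ℝ)) (hY : IsExchangeSet M Ys)
    (hcone : IsConvexCone M Ys) (hR0 : ContainsR0 M Ys) (hnca : NCA M Ys) :
    rhoY M Ys (fun _ _ => (0 : ℝ)) = (0 : EReal) := by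
  haveI := M.hProb
  refine le_antisymm ?_ ?_
  · have : ((∑ i : Fin M.N, (0 : ℝ) : ℝ) : EReal) ∈
        { x : EReal | ∃ m : Fin M.N → ℝ, rhoYFeas M Ys (fun _ _ => (0 : ℝ)) m ∧
          x = ((∑ i, m i : ℝ) : EReal) } := by
      refine ⟨fun _ => 0, ⟨fun _ _ => 0, fun i => zero_mem_Ki M i,
        (fun _ _ => 0), hY.1, fun i => Filter.Eventually.of_forall fun ω => by simp⟩, rfl⟩
    have h := sInf_le this
    simpa [rhoY] using h
  · refine le_sInf ?_
    rintro x ⟨m, ⟨k, hk, Y, hYm, hfe⟩, rfl⟩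
    rw [← EReal.coe_zero, EReal.coe_le_coe_iff]
    by_contra hlt
    push_neg at hlt
    have hNpos : (0 : ℝ) < (M.N : ℝ) := by
      have := M.hN; positivity
    set δ : ℝ := (-(∑ i, m i)) / (M.N : ℝ) with hδ
    have hδpos : 0 < δ := by
      apply div_pos _ hNpos; linarith
    set xv : Fin M.N → ℝ := fun i => m i + δ with hxdef
    have hx0 : (∑ i, xv i) = 0 := by
      rw [hxdef]
      rw [Finset.sum_add_distrib, Finset.sum_const, Finset.card_univ, Fintype.card_fin,
        nsmul_eq_mul, hδ]
      field_simp
      ring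
    have hY' : Y + (fun i (_ : Ω) => xv i) ∈ Ys := hcone.1 _ hYm _ (hR0 xv hx0)
    have hpos : ∀ i, ∀ᵐ ω ∂M.P,
        0 ≤ k i ω + (Y + fun i (_ : Ω) => xv i) i ω := by
      intro i
      refine (hfe i).mono fun ω h => ?_
      simp only [Pi.add_apply] at h ⊢
      rw [hxdef]; dsimp at h ⊢; linarith
    have heq := hnca k hk _ hY' hpos ⟨0, M.hN⟩
    have hge : ∀ᵐ ω ∂M.P, δ ≤ k ⟨0, M.hN⟩ ω +
        (Y + fun i (_ : Ω) => xv i) ⟨0, M.hN⟩ ω := by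
      refine (hfe ⟨0, M.hN⟩).mono fun ω h => ?_
      simp only [Pi.add_apply] at h ⊢
      rw [hxdef]; dsimp at h ⊢; linarith
    obtain ⟨ω, h1, h2⟩ := (heq.and hge).exists
    simp only [Pi.add_apply] at h1 h2
    linarith

/-! ### The main theorem -/

/-- properties of the collective super-replication price `ρ^𝒴_+`:
cash additivity, monotonicity, `ρ^𝒴_+ = ρ^{𝒴+ℝ^N₀}_+` (unconditionally), and
(under the cone condition, `ℝ^N₀ ⊆ 𝒴` and `NCA(𝒴)`) `ρ^𝒴_+(0)=0` and finiteness
with the bound `|ρ^𝒴_+(g)| ≤ ∑ᵢ ‖gⁱ‖_∞` for essentially bounded `g`. -/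
theorem rhoY_properties (Ys : Set (Fin M.N → Ω → ℝ)) (hY : IsExchangeSet M Ys) :
    (∀ (g : Fin M.N → Ω → ℝ), (∀ i, Measurable[M.Fi i M.T] (g i)) →
      ∀ c : Fin M.N → ℝ,
      rhoY M Ys (fun i ω => g i ω + c i) = rhoY M Ys g + ((∑ i, c i : ℝ) : EReal)) ∧
    (∀ (g h : Fin M.N → Ω → ℝ), (∀ i, Measurable[M.Fi i M.T] (g i)) →
      (∀ i, Measurable[M.Fi i M.T] (h i)) → (∀ i, ∀ᵐ ω ∂M.P, g i ω ≤ h i ω) →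
      rhoY M Ys g ≤ rhoY M Ys h) ∧
    (∀ (g : Fin M.N → Ω → ℝ), (∀ i, Measurable[M.Fi i M.T] (g i)) →
      rhoY M Ys g = rhoY M (plusR0 M Ys) g) ∧
    (IsConvexCone M Ys → ContainsR0 M Ys → NCA M Ys →
      (rhoY M Ys (fun _ _ => (0 : ℝ)) = (0 : EReal)) ∧
      (∀ (g : Fin M.N → Ω → ℝ), (∀ i, Measurable[M.Fi i M.T] (g i)) →
        (∀ i, eLpNorm (g i) ⊤ M.P < ⊤) →
        ∃ r : ℝ, rhoY M Ys g = (r : EReal) ∧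
          |r| ≤ ∑ i, (eLpNorm (g i) ⊤ M.P).toReal)) := by
  refine ⟨fun g _ c => rhoY_add_const M Ys g c,
    fun g h _ _ hle => rhoY_mono' M Ys g h hle,
    fun g _ => rhoY_plusR0 M Ys g,
    fun hcone hR0 hnca => ⟨rhoY_zero M Ys hY hcone hR0 hnca, ?_⟩⟩
  intro g hg hb
  set C : Fin M.N → ℝ := fun i => (eLpNorm (g i) ⊤ M.P).toReal with hCdef
  have hCae : ∀ i, ∀ᵐ ω ∂M.P, |g i ω| ≤ C i := by
    intro i
    have h1 := enorm_ae_le_eLpNormEssSup (g i) M.P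
    have hne : eLpNormEssSup (g i) M.P ≠ ⊤ := by
      rw [← eLpNorm_exponent_top]; exact (hb i).ne
    refine h1.mono fun ω hω => ?_
    have h2 := ENNReal.toReal_mono hne hω
    rw [toReal_enorm, Real.norm_eq_abs] at h2
    rw [hCdef]
    simpa [eLpNorm_exponent_top] using h2
  -- upper bound
  have hub : rhoY M Ys g ≤ ((∑ i, C i : ℝ) : EReal) := by
    refine sInf_le ⟨C, ⟨fun _ _ => 0, fun i => zero_mem_Ki M i,
      (fun _ _ => 0), hY.1, fun i => (hCae i).mono fun ω hω => ?_⟩, rfl⟩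
    have := (abs_le.mp hω).2
    simpa using this
  -- lower bound
  have hlb : ((-(∑ i, C i) : ℝ) : EReal) ≤ rhoY M Ys g := by
    have hmono : rhoY M Ys (fun i _ => -C i) ≤ rhoY M Ys g := by
      refine rhoY_mono' M Ys _ _ fun i => (hCae i).mono fun ω hω => ?_
      have := (abs_le.mp hω).1
      linarith
    have hconst : rhoY M Ys (fun i _ => -C i) = ((-(∑ i, C i) : ℝ) : EReal) := by
      have h := rhoY_add_const M Ys (fun _ _ => (0 : ℝ)) (fun i => -C i)
      have h0 : (fun i (ω : Ω) => (fun _ _ => (0 : ℝ)) i ω + (fun i => -C i) i) =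
          (fun i (_ : Ω) => -C i) := by funext i ω; simp
      rw [h0, rhoY_zero M Ys hY hcone hR0 hnca, zero_add] at h
      rw [h, EReal.coe_eq_coe_iff]
      rw [← Finset.sum_neg_distrib]
    rw [← hconst]
    exact hmono
  have hne_top : rhoY M Ys g ≠ ⊤ := (lt_of_le_of_lt hub (EReal.coe_lt_top _)).ne
  have hne_bot : rhoY M Ys g ≠ ⊥ := (lt_of_lt_of_le (EReal.bot_lt_coe _) hlb).ne'
  refine ⟨(rhoY M Ys g).toReal, (EReal.coe_toReal hne_top hne_bot).symm, ?_⟩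
  rw [abs_le]
  constructor
  · have := hlb
    rw [← EReal.coe_toReal hne_top hne_bot, EReal.coe_le_coe_iff] at this
    simpa [hCdef] using this
  · have := hub
    rw [← EReal.coe_toReal hne_top hne_bot, EReal.coe_le_coe_iff] at this
    simpa [hCdef] using this

end Collective
end
end

section
/- Suppose all agents share the same filtration, F^i = F^j for all i, j (hence all X^1,…,X^J are adapted to this common filtration), and take the full zero-sum exchange set 𝒴_0 := { Y ∈ (L^0(Ω,F_T,P))^N : ∑_{i=1}^N Y^i = 0 P-a.s. }. Then for every g = (g^1,…,g^N) ∈ (L^0(Ω,F_T,P))^N: ρ^{𝒴_0}_+(g) = ρ_{full,+}(G) with G = ∑_{i=1}^N g^i. -/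
open MeasureTheory Filter
open scoped ENNReal

noncomputable section

namespace Collective

variable {Ω : Type*} [m0 : MeasurableSpace Ω] (M : Market Ω)

lemma X_meas' (j : Fin M.J) (t : ℕ) (ht : t ≤ M.T) : Measurable (M.X j t) :=
  (M.X_adapted j t ht).mono (M.F_le t) le_rfl

lemma gain_meas (H : Fin M.J → ℕ → Ω → ℝ)
    (hH : ∀ j, ∀ t ∈ Finset.Icc 1 M.T, Measurable (H j t)) (s : Finset (Fin M.J)) :
    Measurable (fun ω => ∑ j ∈ s, ∑ t ∈ Finset.Icc 1 M.T,
      H j t ω * (M.X j t ω - M.X j (t - 1) ω)) := by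
  apply Finset.measurable_sum
  intro j _
  apply Finset.measurable_sum
  intro t ht
  have ht' := (Finset.mem_Icc.mp ht).2
  exact (hH j t ht).mul
    ((X_meas' M j t ht').sub (X_meas' M j (t - 1) (le_trans (Nat.sub_le t 1) ht')))

/-- with a common filtration for all agents and the full zero-sum
exchange set `𝒴₀`, the collective super-replication price equals the
super-replication price of `G = ∑ᵢ gⁱ` in the full market. -/
theorem rhoY0_eq_rhoFull (hcommon : ∀ i, M.Fi i = M.F)
    (hcover : ∀ j, ∃ i, j ∈ M.assets i)
    (g : Fin M.N → Ω → ℝ) (hg : ∀ i, Measurable (g i)) :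
    rhoY M (Y0 M) g = rhoFull M (fun ω => ∑ i, g i ω) := by
  classical
  have hN0 : (M.N : ℝ) ≠ 0 := by
    have := M.hN; positivity
  unfold rhoY rhoFull
  congr 1
  ext x
  simp only [Set.mem_setOf_eq]
  constructor
  · -- rhoY feasible → rhoFull feasible
    rintro ⟨m, ⟨k, hk, Y, hY, hineq⟩, rfl⟩
    simp only [Ki, KiSt, Set.mem_setOf_eq] at hk
    choose H hHmeas hkeq using hk
    refine ⟨∑ i, m i, ⟨fun ω => ∑ i, k i ω,
      ⟨fun j t ω => ∑ i, if j ∈ M.assets i then H i j t ω else 0, ?_, ?_⟩, ?_⟩, rfl⟩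
    · intro j t
      apply Finset.measurable_sum
      intro i _
      by_cases h : j ∈ M.assets i
      · simp only [if_pos h]
        have := hHmeas i j h t
        rwa [hcommon i] at this
      · simp only [if_neg h]
        exact @measurable_const ℝ Ω _ (M.F (t - 1)) 0
    · funext ω
      have step : ∀ i, k i ω = ∑ j, ∑ t ∈ Finset.Icc (0 + 1) M.T,
          (if j ∈ M.assets i then H i j t ω * (M.X j t ω - M.X j (t - 1) ω) else 0) := by
        intro i
        rw [hkeq i]
        have : ∑ j, ∑ t ∈ Finset.Icc (0 + 1) M.T,
            (if j ∈ M.assets i then H i j t ω * (M.X j t ω - M.X j (t - 1) ω) else 0)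
            = ∑ j, (if j ∈ M.assets i then
                ∑ t ∈ Finset.Icc (0 + 1) M.T, H i j t ω * (M.X j t ω - M.X j (t - 1) ω)
              else 0) := by
          refine Finset.sum_congr rfl fun j _ => ?_
          split_ifs with h <;> simp
        rw [this, Finset.sum_ite_mem, Finset.univ_inter]
      calc (∑ i, k i ω)
          = ∑ i, ∑ j, ∑ t ∈ Finset.Icc (0 + 1) M.T,
              (if j ∈ M.assets i then H i j t ω * (M.X j t ω - M.X j (t - 1) ω) else 0) :=
            Finset.sum_congr rfl fun i _ => step i
        _ = ∑ j, ∑ i, ∑ t ∈ Finset.Icc (0 + 1) M.T,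
              (if j ∈ M.assets i then H i j t ω * (M.X j t ω - M.X j (t - 1) ω) else 0) :=
            Finset.sum_comm
        _ = ∑ j, ∑ t ∈ Finset.Icc (0 + 1) M.T, ∑ i,
              (if j ∈ M.assets i then H i j t ω * (M.X j t ω - M.X j (t - 1) ω) else 0) :=
            Finset.sum_congr rfl fun j _ => Finset.sum_comm
        _ = ∑ j, ∑ t ∈ Finset.Icc (0 + 1) M.T,
              (∑ i, if j ∈ M.assets i then H i j t ω else 0) *
                (M.X j t ω - M.X j (t - 1) ω) := by
            refine Finset.sum_congr rfl fun j _ => Finset.sum_congr rfl fun t _ => ?_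
            rw [Finset.sum_mul]
            refine Finset.sum_congr rfl fun i _ => ?_
            split_ifs <;> simp
    · have h1 : ∀ᵐ ω ∂M.P, ∀ i, g i ω ≤ m i + k i ω + Y i ω := (ae_all_iff).mpr hineq
      filter_upwards [h1, hY.2] with ω h1 h2
      calc ∑ i, g i ω ≤ ∑ i, (m i + k i ω + Y i ω) := Finset.sum_le_sum fun i _ => h1 i
        _ = (∑ i, m i) + (∑ i, k i ω) := by
            rw [Finset.sum_add_distrib, Finset.sum_add_distrib, h2, add_zero]
  · -- rhoFull feasible → rhoY feasible
    rintro ⟨m, ⟨k, ⟨H, hH, rfl⟩, hae⟩, rfl⟩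
    set G : Ω → ℝ := fun ω => ∑ i, g i ω with hG
    set kf : Ω → ℝ := fun ω => ∑ j, ∑ t ∈ Finset.Icc (0 + 1) M.T,
      H j t ω * (M.X j t ω - M.X j (t - 1) ω) with hkf
    choose ι hι using hcover
    set kk : Fin M.N → Ω → ℝ := fun i ω => ∑ j ∈ M.assets i, ∑ t ∈ Finset.Icc (0 + 1) M.T,
      (if ι j = i then H j t ω else 0) * (M.X j t ω - M.X j (t - 1) ω) with hkk
    have hHm : ∀ j, ∀ t ∈ Finset.Icc 1 M.T, Measurable (H j t) := fun j t _ =>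
      (hH j t).mono (M.F_le (t - 1)) le_rfl
    have hkfm : Measurable kf := gain_meas M H hHm _
    have hGm : Measurable G := Finset.measurable_sum _ fun i _ => hg i
    have hkkm : ∀ i, Measurable (kk i) := by
      intro i
      exact gain_meas M (fun j t ω => if ι j = i then H j t ω else 0)
        (fun j t ht => by
          by_cases h : ι j = i
          · simp only [if_pos h]; exact hHm j t ht
          · simp only [if_neg h]; exact measurable_const) _
    -- the fiberwise sum identity
    have hsum : ∀ ω, ∑ i, kk i ω = kf ω := by
      intro ω
      have step : ∀ i, kk i ω = ∑ j ∈ Finset.univ.filter (fun j => ι j = i),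
          ∑ t ∈ Finset.Icc (0 + 1) M.T, H j t ω * (M.X j t ω - M.X j (t - 1) ω) := by
        intro i
        have e1 : kk i ω = ∑ j ∈ M.assets i,
            (if ι j = i then ∑ t ∈ Finset.Icc (0 + 1) M.T,
              H j t ω * (M.X j t ω - M.X j (t - 1) ω) else 0) := by
          rw [hkk]
          refine Finset.sum_congr rfl fun j _ => ?_
          split_ifs with h <;> simp
        have e2 : (M.assets i).filter (fun j => ι j = i)
            = Finset.univ.filter (fun j => ι j = i) := by
          ext j
          simp only [Finset.mem_filter, Finset.mem_univ, true_and]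
          exact ⟨fun h => h.2, fun h => ⟨h ▸ hι j, h⟩⟩
        rw [e1, ← Finset.sum_filter, e2]
      rw [Finset.sum_congr rfl fun i _ => step i]
      exact Finset.sum_fiberwise _ _ _
    set Y : Fin M.N → Ω → ℝ := fun i ω =>
      g i ω - m / M.N - kk i ω + (1 / M.N) * (m + kf ω - G ω) with hYdef
    have hmemKi : ∀ i, kk i ∈ Ki M i := by
      intro i
      refine ⟨fun j t ω => if ι j = i then H j t ω else 0, ?_, rfl⟩
      intro j _ t
      rw [hcommon i]
      by_cases h : ι j = i
      · simp only [if_pos h]; exact hH j t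
      · simp only [if_neg h]
        exact @measurable_const ℝ Ω _ (M.F (t - 1)) 0
    have hY0 : Y ∈ Y0 M := by
      constructor
      · intro i
        rw [hcommon i, M.F_top]
        exact (((hg i).sub measurable_const).sub (hkkm i)).add
          (((measurable_const.add hkfm).sub hGm).const_mul _)
      · refine Filter.Eventually.of_forall fun ω => ?_
        have expand : ∑ i, Y i ω
            = G ω - (M.N : ℝ) * (m / M.N) - (∑ i, kk i ω)
              + (M.N : ℝ) * ((1 / M.N) * (m + kf ω - G ω)) := by
          simp only [hYdef, Finset.sum_add_distrib, Finset.sum_sub_distrib,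
            Finset.sum_const, Finset.card_univ, Fintype.card_fin, nsmul_eq_mul, hG]
        rw [expand, hsum ω]
        field_simp
        ring
    refine ⟨fun _ => m / M.N, ⟨kk, hmemKi, Y, hY0, ?_⟩, ?_⟩
    · intro i
      filter_upwards [hae] with ω hω
      have h0 : 0 ≤ (1 / (M.N : ℝ)) * (m + kf ω - G ω) := by
        have : G ω ≤ m + kf ω := hω
        have hpos : 0 ≤ (1 / (M.N : ℝ)) := by positivity
        nlinarith
      simp only [hYdef]
      linarith
    · have : (∑ _i : Fin M.N, m / (M.N : ℝ)) = m := by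
        rw [Finset.sum_const, Finset.card_univ, Fintype.card_fin, nsmul_eq_mul]
        field_simp
      rw [this]

end Collective
end
end

section
/- Suppose 𝒴 is a convex cone containing ℝ^N_0 := { x ∈ ℝ^N : ∑_i x^i = 0 }. Then for every g = (g^1,…,g^N) ∈ ⨉_{i=1}^N L^0(Ω,F^i_T,P): ρ^𝒴_+(g) = N · π^𝒴_+(g) (as extended real numbers). -/
open MeasureTheory Filter
open scoped ENNReal

noncomputable section

namespace Collective

variable {Ω : Type*} [m0 : MeasurableSpace Ω] (M : Market Ω)

lemma sInf_coe_mul_image (c : ℝ) (hc : 0 < c) (S : Set EReal) :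
    sInf ((fun x => (c : EReal) * x) '' S) = (c : EReal) * sInf S := by
  have hc' : (0 : EReal) < (c : EReal) := EReal.coe_pos.2 hc
  have hctop : (c : EReal) ≠ ⊤ := EReal.coe_ne_top c
  apply le_antisymm
  · rw [← EReal.div_le_iff_le_mul hc' hctop]
    apply le_sInf
    intro s hs
    rw [EReal.div_le_iff_le_mul hc' hctop]
    exact sInf_le ⟨s, hs, rfl⟩
  · apply le_sInf
    rintro _ ⟨s, hs, rfl⟩
    show (c : EReal) * sInf S ≤ (c : EReal) * s
    rw [EReal.mul_comm (c : EReal) (sInf S), EReal.mul_comm (c : EReal) s]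
    exact mul_le_mul_of_nonneg_right (sInf_le hs) hc'.le


/-- if `𝒴` is a convex cone containing `ℝ^N₀`,
then `ρ^𝒴_+(g) = N · π^𝒴_+(g)` as extended reals. -/
theorem rhoY_eq_N_mul_piY (Ys : Set (Fin M.N → Ω → ℝ)) (hY : IsExchangeSet M Ys)
    (hcone : IsConvexCone M Ys) (hR0 : ContainsR0 M Ys)
    (g : Fin M.N → Ω → ℝ) (hg : ∀ i, Measurable[M.Fi i M.T] (g i)) :
    rhoY M Ys g = (M.N : EReal) * piY M Ys g := by
  have hNpos : (0 : ℝ) < (M.N : ℝ) := by exact_mod_cast Nat.lt_of_lt_of_le Nat.zero_lt_one M.hN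
  have hNne : (M.N : ℝ) ≠ 0 := ne_of_gt hNpos
  have hset : { x : EReal | ∃ m : Fin M.N → ℝ, rhoYFeas M Ys g m ∧
        x = ((∑ i, m i : ℝ) : EReal) }
      = (fun x => (((M.N : ℝ) : EReal)) * x) ''
        { x : EReal | ∃ m : ℝ, piYFeas M Ys g m ∧ x = (m : EReal) } := by
    ext x
    constructor
    · rintro ⟨m, ⟨k, hk, Y, hYmem, hineq⟩, rfl⟩
      refine ⟨(((∑ i, m i) / M.N : ℝ) : EReal),
        ⟨(∑ i, m i) / M.N, ⟨k, hk, ?_⟩, rfl⟩, ?_⟩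
      · -- exchange the price disparities
        refine ⟨fun i ω => Y i ω + (m i - (∑ i, m i) / M.N), ?_, ?_⟩
        · have hx : (fun i (_ : Ω) => m i - (∑ i, m i) / M.N) ∈ Ys := by
            apply hR0
            rw [Finset.sum_sub_distrib, Finset.sum_const, Finset.card_univ,
              Fintype.card_fin, nsmul_eq_mul]
            field_simp
            ring
          have := hcone.1 Y hYmem _ hx
          convert this using 1
          rfl
        · intro i
          filter_upwards [hineq i] with ω hω
          have : m i + k i ω + Y i ω
              = (∑ i, m i) / M.N + k i ω + (Y i ω + (m i - (∑ i, m i) / M.N)) := by ring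
          linarith [hω, le_of_eq this]
      · show ((M.N : ℝ) : EReal) * (((∑ i, m i) / M.N : ℝ) : EReal)
            = ((∑ i, m i : ℝ) : EReal)
        rw [← EReal.coe_mul]
        congr 1
        field_simp
    · rintro ⟨_, ⟨m, ⟨k, hk, Y, hYmem, hineq⟩, rfl⟩, rfl⟩
      refine ⟨fun _ => m, ⟨k, hk, Y, hYmem, fun i => hineq i⟩, ?_⟩
      show ((M.N : ℝ) : EReal) * (m : EReal)
          = ((∑ _i : Fin M.N, m : ℝ) : EReal)
      rw [← EReal.coe_mul]
      congr 1
      rw [Finset.sum_const, Finset.card_univ, Fintype.card_fin, nsmul_eq_mul]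
  have hNcast : ((M.N : ℝ) : EReal) = (M.N : EReal) := by norm_cast
  rw [rhoY, piY, hset, sInf_coe_mul_image _ hNpos, hNcast]

end Collective
end
end
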